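/- arXiv:1709.01903 — 3 statements merged into one kernel-verified Lean document; each statement's English description precedes it below -/
import Mathlib

section
/- Let $A$ be a real $n \times m$ matrix with $m \ge n$. For indices $i_1,\dots,i_n \in \{1,\dots,m\}$ let $[A]_{i_1\cdots i_n}$ denote the $n \times n$ matrix whose $k$-th column is column $i_k$ of $A$. Then $\sum_{i_1,\dots,i_n=1}^m |\det [A]_{i_1\cdots i_n}|^2 = \frac{n!}{n^n}\left(\inf_{M \in \mathrm{SL}(n,\mathbb{R})} \|MA\|_F^2\right)^n$, where $\|B\|_F^2 = \sum_{j,i}|B_{ji}|^2$ is the squared Frobenius norm. -/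
/-!
Expanding `det (A Aᵀ)` by multilinearity in its rows and reindexing by permutations gives
`∑ᵢ det [A]ᵢ ^ 2 = n! · det (A Aᵀ)`. On the other side, `‖M A‖_F² = tr (M (A Aᵀ) Mᵀ)`, and for
`det M = 1` the matrix `M (A Aᵀ) Mᵀ` is positive semidefinite with determinant `det (A Aᵀ)`, so
AM–GM on its eigenvalues bounds the trace below by `n · det (A Aᵀ) ^ (1 / n)`. When `A Aᵀ` is
positive definite the bound is attained at a multiple of `(A Aᵀ) ^ (-1 / 2)`; the singular case
follows by applying this to `A Aᵀ + ε • 1` and letting `ε → 0`.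
-/

open Matrix

theorem Real.card_mul_prod_rpow_inv_le_sum {κ : Type*} [Fintype κ] [Nonempty κ] (z : κ → ℝ)
    (hz : ∀ i, 0 ≤ z i) :
    Fintype.card κ * (∏ i, z i) ^ (Fintype.card κ : ℝ)⁻¹ ≤ ∑ i, z i := by
  have hcard : (0 : ℝ) < Fintype.card κ := by exact_mod_cast Fintype.card_pos
  have := Real.geom_mean_le_arith_mean Finset.univ (fun _ => 1) z (fun _ _ => zero_le_one)
    (by simpa using hcard) (fun i _ => hz i)
  simp only [Real.rpow_one, one_mul, Finset.sum_const, Finset.card_univ, nsmul_eq_mul,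
    mul_one] at this
  rwa [le_div_iff₀ hcard, mul_comm] at this

namespace Matrix

section CauchyBinet

variable {κ ι R : Type*} [Fintype κ] [DecidableEq κ] [Fintype ι] [CommRing R]

theorem det_mul_eq_sum_det_submatrix (A : Matrix κ ι R) (B : Matrix ι κ R) :
    (A * B).det = ∑ i : κ → ι, (∏ k, B (i k) k) * (A.submatrix id i).det := by
  have hrows : (A * B)ᵀ = fun k => ∑ j, B j k • Aᵀ j := by
    ext k l
    simp [mul_apply, mul_comm]
  have hexpand := (detRowAlternating (n := κ) (R := R)).toMultilinearMap.map_sum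
    (fun k j => B j k • Aᵀ j)
  rw [← det_transpose, hrows]
  refine hexpand.trans (Fintype.sum_congr _ _ fun i => ?_)
  rw [AlternatingMap.coe_multilinearMap, AlternatingMap.map_smul_univ, smul_eq_mul,
    ← det_transpose]
  rfl

theorem sum_det_submatrix_sq (A : Matrix κ ι R) :
    ∑ i : κ → ι, (A.submatrix id i).det ^ 2 = (Fintype.card κ).factorial * (A * Aᵀ).det := by
  have hperm : ∀ σ : Equiv.Perm κ, ∑ i : κ → ι,
      (Equiv.Perm.sign σ : R) * (A.submatrix id i).det * ∏ k, A (σ k) (i k) = (A * Aᵀ).det := by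
    intro σ
    rw [det_mul_eq_sum_det_submatrix]
    symm
    -- substitute `i = j ∘ σ`: the sign of the permuted columns cancels the sign of `σ`
    refine Fintype.sum_bijective (· ∘ σ) (σ.symm.arrowCongr (Equiv.refl ι)).bijective _ _
      fun j => ?_
    have hsubmatrix : A.submatrix id (j ∘ σ) = (A.submatrix id j).submatrix id σ := rfl
    have hprod : ∏ k, A (σ k) (j (σ k)) = ∏ k, A k (j k) :=
      Equiv.prod_comp σ (fun k => A k (j k))
    have hsign : (Equiv.Perm.sign σ : R) * Equiv.Perm.sign σ = 1 := by
      rw [← Int.cast_mul, ← Units.val_mul, Int.units_mul_self, Units.val_one, Int.cast_one]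
    simp only [Function.comp_apply, hsubmatrix, det_permute', hprod, transpose_apply]
    linear_combination -(∏ k, A k (j k)) * (A.submatrix id j).det * hsign
  calc ∑ i : κ → ι, (A.submatrix id i).det ^ 2
      = ∑ i : κ → ι, ∑ σ : Equiv.Perm κ,
          (Equiv.Perm.sign σ : R) * (A.submatrix id i).det * ∏ k, A (σ k) (i k) := by
        refine Fintype.sum_congr _ _ fun i => ?_
        rw [sq]
        nth_rw 2 [det_apply']
        simp [Finset.mul_sum, mul_comm, mul_left_comm]
    _ = ∑ σ : Equiv.Perm κ, (A * Aᵀ).det := by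
        rw [Finset.sum_comm]
        simp only [hperm]
    _ = (Fintype.card κ).factorial * (A * Aᵀ).det := by simp [Fintype.card_perm]

end CauchyBinet

theorem sum_sq_eq_trace_mul_transpose {κ ι R : Type*} [Fintype κ] [Fintype ι] [Semiring R]
    (C : Matrix κ ι R) :
    ∑ j, ∑ i, C j i ^ 2 = (C * Cᵀ).trace := by
  simp [trace, mul_apply, sq]

section SpecialLinearOrbit

variable {κ : Type*} [Fintype κ] [DecidableEq κ] [Nonempty κ] {B : Matrix κ κ ℝ}

theorem PosSemidef.card_mul_det_rpow_inv_le_trace (hB : B.PosSemidef) :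
    Fintype.card κ * B.det ^ (Fintype.card κ : ℝ)⁻¹ ≤ B.trace := by
  rw [hB.1.det_eq_prod_eigenvalues, hB.1.trace_eq_sum_eigenvalues]
  simpa using Real.card_mul_prod_rpow_inv_le_sum _ hB.eigenvalues_nonneg

open scoped MatrixOrder in
theorem PosDef.exists_specialLinearGroup_mul_mul_transpose_eq (hB : B.PosDef) :
    ∃ M : SpecialLinearGroup κ ℝ,
      (M : Matrix κ κ ℝ) * B * (M : Matrix κ κ ℝ)ᵀ = B.det ^ (Fintype.card κ : ℝ)⁻¹ • 1 := by
  set S := CFC.sqrt B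
  set c := B.det ^ (Fintype.card κ : ℝ)⁻¹
  have hS : S.PosSemidef := nonneg_iff_posSemidef.1 (CFC.sqrt_nonneg B)
  have hSS : S * S = B := CFC.sqrt_mul_sqrt_self B hB.posSemidef.nonneg
  have hSt : Sᵀ = S := by simpa [IsHermitian] using hS.1
  have hdetS : S.det = √B.det := by simpa using hB.posSemidef.det_sqrt
  have hSunit : IsUnit S.det := by
    rw [hdetS]
    exact (Real.sqrt_pos.2 hB.det_pos).ne'.isUnit
  have hc : 0 ≤ c := Real.rpow_nonneg hB.det_pos.le _
  have hsqrtc : √c ^ Fintype.card κ = S.det := by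
    rw [hdetS, eq_comm, Real.sqrt_eq_iff_eq_sq hB.det_pos.le (by positivity), ← pow_mul, mul_comm,
      pow_mul, Real.sq_sqrt hc, Real.rpow_inv_natCast_pow hB.det_pos.le Fintype.card_ne_zero]
  refine ⟨⟨√c • S⁻¹, ?_⟩, ?_⟩
  · rw [det_smul, det_nonsing_inv, hsqrtc, Ring.inverse_eq_inv', mul_inv_cancel₀ hSunit.ne_zero]
  · have hSBS : S⁻¹ * B * S⁻¹ = 1 := by
      rw [← hSS, ← mul_assoc, nonsing_inv_mul S hSunit, one_mul, mul_nonsing_inv S hSunit]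
    simp only [transpose_smul, transpose_nonsing_inv, hSt, smul_mul, Matrix.mul_smul, hSBS,
      smul_smul, Real.mul_self_sqrt hc]

theorem PosSemidef.iInf_trace_mul_mul_transpose (hB : B.PosSemidef) :
    ⨅ M : SpecialLinearGroup κ ℝ, ((M : Matrix κ κ ℝ) * B * (M : Matrix κ κ ℝ)ᵀ).trace =
      Fintype.card κ * B.det ^ (Fintype.card κ : ℝ)⁻¹ := by
  set n := Fintype.card κ
  set F : SpecialLinearGroup κ ℝ → ℝ :=
    fun M => ((M : Matrix κ κ ℝ) * B * (M : Matrix κ κ ℝ)ᵀ).trace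
  set f : ℝ → ℝ := fun ε => n * (B + ε • 1).det ^ (n : ℝ)⁻¹
  have hlow : ∀ M, n * B.det ^ (n : ℝ)⁻¹ ≤ F M := fun M => by
    simpa [F, det_mul] using
      (hB.mul_mul_conjTranspose_same (M : Matrix κ κ ℝ)).card_mul_det_rpow_inv_le_trace
  have hbdd : BddBelow (Set.range F) := ⟨_, Set.forall_mem_range.2 hlow⟩
  have hup : ∀ ε > 0, ⨅ M, F M ≤ f ε := by
    intro ε hε
    obtain ⟨M, hM⟩ :=
      (PosDef.posSemidef_add hB (PosDef.one.smul hε)).exists_specialLinearGroup_mul_mul_transpose_eq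
    have hMM : 0 ≤ ((M : Matrix κ κ ℝ) * (M : Matrix κ κ ℝ)ᵀ).trace := by
      simpa using (posSemidef_self_mul_conjTranspose (M : Matrix κ κ ℝ)).trace_nonneg
    calc ⨅ M, F M ≤ F M := ciInf_le hbdd M
      _ ≤ ((M : Matrix κ κ ℝ) * (B + ε • 1) * (M : Matrix κ κ ℝ)ᵀ).trace := by
        rw [mul_add, add_mul, trace_add, Matrix.mul_smul, smul_mul, trace_smul, mul_one,
          smul_eq_mul, le_add_iff_nonneg_right]
        exact mul_nonneg hε.le hMM
      _ = f ε := by rw [hM, trace_smul, trace_one, smul_eq_mul, mul_comm]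
  have hf : Continuous f := by fun_prop (disch := positivity)
  refine le_antisymm ?_ (le_ciInf hlow)
  simpa [f] using ge_of_tendsto (hf.continuousWithinAt (s := Set.Ioi 0) (x := 0)).tendsto
    (eventually_nhdsWithin_of_forall hup)

end SpecialLinearOrbit

end Matrix

theorem stmt3_general (n m : ℕ) (A : Matrix (Fin n) (Fin m) ℝ) :
    ∑ i : Fin n → Fin m, (A.submatrix id i).det ^ 2 =
      ((n.factorial : ℝ) / n ^ n) *
        (⨅ M : Matrix.SpecialLinearGroup (Fin n) ℝ,
          ∑ j : Fin n, ∑ i : Fin m, (((M : Matrix (Fin n) (Fin n) ℝ) * A) j i) ^ 2) ^ n := by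
  rcases Nat.eq_zero_or_pos n with rfl | hn
  · simp
  have : Nonempty (Fin n) := ⟨⟨0, hn⟩⟩
  have hAAt : (A * Aᵀ).PosSemidef := by
    simpa using posSemidef_self_mul_conjTranspose A
  have hfrob : ∀ M : SpecialLinearGroup (Fin n) ℝ,
      ∑ j, ∑ i, (((M : Matrix (Fin n) (Fin n) ℝ) * A) j i) ^ 2 =
        ((M : Matrix (Fin n) (Fin n) ℝ) * (A * Aᵀ) * (M : Matrix (Fin n) (Fin n) ℝ)ᵀ).trace := by
    intro M
    simp only [sum_sq_eq_trace_mul_transpose, transpose_mul, Matrix.mul_assoc]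
  simp only [hfrob, hAAt.iInf_trace_mul_mul_transpose, sum_det_submatrix_sq, Fintype.card_fin,
    mul_pow, Real.rpow_inv_natCast_pow hAAt.det_nonneg hn.ne']
  field_simp

theorem stmt3 (n m : ℕ) (hnm : n ≤ m) (A : Matrix (Fin n) (Fin m) ℝ) :
    ∑ i : Fin n → Fin m, (A.submatrix id i).det ^ 2 =
      ((n.factorial : ℝ) / n ^ n) *
        (⨅ M : Matrix.SpecialLinearGroup (Fin n) ℝ,
          ∑ j : Fin n, ∑ i : Fin m, (((M : Matrix (Fin n) (Fin n) ℝ) * A) j i) ^ 2) ^ n :=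
  stmt3_general n m A
end

section
/- Let $\mathcal{A}$ be a symmetric bilinear form on a $d$-dimensional real vector space $V$, let $v_1,\dots,v_d \in V$, and let $A$ be the $d\times d$ matrix $A_{ij} = \mathcal{A}(v_i,v_j)$. Then $\inf_{M \in \mathrm{SL}(d,\mathbb{R})} \left(\sum_{j_1,j_2=1}^d |(MAM^T)_{j_1 j_2}|^2\right)^{d/4} = d^{d/4} |\det A|^{1/2}$. -/
/-!
For `M ∈ SL(n, ℝ)` the matrix `M A Mᵀ` is again symmetric with determinant `det A`, and the sum
of the squares of its entries is `tr (M A Mᵀ)² = ∑ λᵢ²` over its eigenvalues; by AM–GM this is at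
least `n |∏ λᵢ|^(2/n) = n |det A|^(2/n)`. Conversely, diagonalising `A` by an orthogonal matrix
and rescaling the axes by factors `sᵢ` with `|∏ sᵢ| = 1` (a reflection in one axis repairs the
sign of the determinant without changing a diagonal matrix) turns `A` into `diag (sᵢ² λᵢ)`.
If `det A ≠ 0`, taking `sᵢ ∝ |λᵢ|^(-1/2)` makes all `|sᵢ² λᵢ|` equal, the equality case of
AM–GM; if some `λₖ = 0`, shrinking every other axis by `t → 0` drives the sum to `0`.
-/

open Matrix Finset Filter Topology

lemma Real.card_mul_prod_rpow_inv_card_le_sum {ι : Type*} [Fintype ι] [Nonempty ι]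
    {x : ι → ℝ} (hx : ∀ i, 0 ≤ x i) :
    Fintype.card ι * (∏ i, x i) ^ (Fintype.card ι : ℝ)⁻¹ ≤ ∑ i, x i := by
  have h := Real.geom_mean_le_arith_mean univ (fun _ => 1) x (by simp)
    (by simp [Fintype.card_pos]) fun i _ => hx i
  simp only [Real.rpow_one, sum_const, card_univ, nsmul_eq_mul, mul_one, one_mul] at h
  rwa [le_div_iff₀ (Nat.cast_pos.mpr Fintype.card_pos), mul_comm] at h

lemma Real.mul_rpow_two_div_rpow_div_four {d x : ℝ} (hd : 0 < d) (hx : 0 ≤ x) :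
    (d * x ^ (2 / d)) ^ (d / 4) = d ^ (d / 4) * x ^ (1 / 2 : ℝ) := by
  rw [Real.mul_rpow hd.le (by positivity), ← Real.rpow_mul hx]
  congr 2
  field_simp
  ring

lemma Real.tendsto_pow_four_mul_rpow_nhdsGT_zero (C : ℝ) {p : ℝ} (hp : 0 < p) :
    Tendsto (fun t : ℝ => (t ^ 4 * C) ^ p) (𝓝[>] 0) (𝓝 0) := by
  have hcont : Continuous fun t : ℝ => (t ^ 4 * C) ^ p :=
    (Real.continuous_rpow_const hp.le).comp (by fun_prop)
  simpa [Real.zero_rpow hp.ne'] using tendsto_nhdsWithin_of_tendsto_nhds (hcont.tendsto 0)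

namespace Matrix

variable {m n : Type*} [Fintype m] [Fintype n]

lemma sum_sum_sq_apply_eq_trace_mul_transpose (S : Matrix m n ℝ) :
    ∑ i, ∑ j, S i j ^ 2 = (S * Sᵀ).trace := by
  simp only [trace, diag, mul_apply, transpose_apply, sq]

lemma sum_sum_sq_diagonal_apply [DecidableEq n] (w : n → ℝ) :
    ∑ i, ∑ j, diagonal w i j ^ 2 = ∑ i, w i ^ 2 := by
  refine sum_congr rfl fun i _ => ?_
  rw [sum_eq_single i (fun j _ hj => by simp [diagonal_apply_ne _ hj.symm]) (by simp)]
  simp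

variable {A S : Matrix n n ℝ}

lemma IsHermitian.mul_mul_transpose (hA : A.IsHermitian) (N : Matrix n n ℝ) :
    (N * A * Nᵀ).IsHermitian := by
  simpa [conjTranspose_eq_transpose_of_trivial] using isHermitian_mul_mul_conjTranspose N hA

variable [DecidableEq n]

lemma IsHermitian.sum_sum_sq_apply_eq_sum_sq_eigenvalues (hS : S.IsHermitian) :
    ∑ i, ∑ j, S i j ^ 2 = ∑ i, hS.eigenvalues i ^ 2 := by
  set U : Matrix n n ℝ := hS.eigenvectorUnitary.1
  have hUU : star U * U = 1 := Unitary.coe_star_mul_self hS.eigenvectorUnitary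
  have hspec : S = U * diagonal hS.eigenvalues * star U := by
    simpa using hS.spectral_theorem
  have hSt : Sᵀ = S := by simpa using hS.eq
  calc ∑ i, ∑ j, S i j ^ 2 = (S * S).trace := by
        rw [sum_sum_sq_apply_eq_trace_mul_transpose, hSt]
    _ = (diagonal hS.eigenvalues * diagonal hS.eigenvalues).trace := by
      conv_lhs => rw [hspec]
      rw [show ∀ D : Matrix n n ℝ, U * D * star U * (U * D * star U) = U * (D * D) * star U from
          fun D => by
            simp only [Matrix.mul_assoc, ← Matrix.mul_assoc (star U) U, hUU, Matrix.one_mul],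
        trace_mul_cycle, hUU, Matrix.one_mul]
    _ = ∑ i, hS.eigenvalues i ^ 2 := by simp [diagonal_mul_diagonal, trace_diagonal, sq]

lemma IsHermitian.card_mul_abs_det_rpow_le_sum_sum_sq [Nonempty n] (hS : S.IsHermitian) :
    Fintype.card n * |S.det| ^ (2 / Fintype.card n : ℝ) ≤ ∑ i, ∑ j, S i j ^ 2 := by
  have hdet : S.det = ∏ i, hS.eigenvalues i := by simpa using hS.det_eq_prod_eigenvalues
  have hdet_rpow : |S.det| ^ (2 / Fintype.card n : ℝ)
      = (∏ i, hS.eigenvalues i ^ 2) ^ (Fintype.card n : ℝ)⁻¹ := by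
    rw [prod_pow, ← hdet, ← sq_abs, ← Real.rpow_natCast, ← Real.rpow_mul (abs_nonneg _)]
    push_cast
    ring_nf
  rw [hdet_rpow, hS.sum_sum_sq_apply_eq_sum_sq_eigenvalues]
  exact Real.card_mul_prod_rpow_inv_card_le_sum fun i => sq_nonneg _

lemma SpecialLinearGroup.det_mul_mul_transpose (M : SpecialLinearGroup n ℝ) (A : Matrix n n ℝ) :
    ((M : Matrix n n ℝ) * A * (M : Matrix n n ℝ)ᵀ).det = A.det := by
  simp [det_mul]

lemma IsHermitian.transpose_eigenvectorUnitary_mul_mul (hA : A.IsHermitian) :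
    (hA.eigenvectorUnitary.1 : Matrix n n ℝ)ᵀ * A * hA.eigenvectorUnitary.1
      = diagonal hA.eigenvalues := by
  simpa [Unitary.conjStarAlgAut_star_apply, star_eq_conjTranspose] using
    hA.conjStarAlgAut_star_eigenvectorUnitary

lemma IsHermitian.abs_det_eigenvectorUnitary (hA : A.IsHermitian) :
    |(hA.eigenvectorUnitary.1 : Matrix n n ℝ).det| = 1 := by
  have h := (det_of_mem_unitary hA.eigenvectorUnitary.2).2
  rw [star_trivial, ← sq, ← sq_abs] at h
  exact (pow_eq_one_iff_of_nonneg (abs_nonneg _) two_ne_zero).mp h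

lemma exists_specialLinearGroup_mul_mul_transpose_eq_diagonal_of_abs_det_eq_one [Nonempty n]
    {N : Matrix n n ℝ} (hN : |N.det| = 1) {w : n → ℝ} (hNA : N * A * Nᵀ = diagonal w) :
    ∃ M : SpecialLinearGroup n ℝ,
      (M : Matrix n n ℝ) * A * (M : Matrix n n ℝ)ᵀ = diagonal w := by
  obtain ⟨i₀⟩ := ‹Nonempty n›
  have hN2 : N.det * N.det = 1 := by rw [← sq, ← sq_abs, hN, one_pow]
  set e : n → ℝ := Function.update 1 i₀ N.det
  have he : ∀ i, e i * e i = 1 := fun i => by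
    rcases eq_or_ne i i₀ with rfl | hi
    · simpa [e] using hN2
    · simp [e, hi]
  refine ⟨⟨diagonal e * N, ?_⟩, ?_⟩
  · simp [e, det_mul, det_diagonal, prod_update_of_mem, hN2]
  · show diagonal e * N * A * (diagonal e * N)ᵀ = diagonal w
    rw [transpose_mul, diagonal_transpose]
    calc diagonal e * N * A * (Nᵀ * diagonal e) = diagonal e * (N * A * Nᵀ) * diagonal e := by
          simp only [Matrix.mul_assoc]
      _ = diagonal w := by
          rw [hNA, diagonal_mul_diagonal, diagonal_mul_diagonal]
          congr 1
          funext i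
          linear_combination w i * he i

lemma IsHermitian.exists_specialLinearGroup_mul_mul_transpose_eq_diagonal [Nonempty n]
    (hA : A.IsHermitian) {s : n → ℝ} (hs : |∏ i, s i| = 1) :
    ∃ M : SpecialLinearGroup n ℝ, (M : Matrix n n ℝ) * A * (M : Matrix n n ℝ)ᵀ
      = diagonal fun i => s i ^ 2 * hA.eigenvalues i := by
  set U : Matrix n n ℝ := hA.eigenvectorUnitary.1
  apply exists_specialLinearGroup_mul_mul_transpose_eq_diagonal_of_abs_det_eq_one
    (N := diagonal s * Uᵀ)
  · rw [det_mul, det_diagonal, det_transpose, abs_mul, hs, hA.abs_det_eigenvectorUnitary, one_mul]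
  · rw [transpose_mul, transpose_transpose, diagonal_transpose]
    calc diagonal s * Uᵀ * A * (U * diagonal s) = diagonal s * (Uᵀ * A * U) * diagonal s := by
          simp only [Matrix.mul_assoc]
      _ = _ := by
          rw [hA.transpose_eigenvectorUnitary_mul_mul, diagonal_mul_diagonal, diagonal_mul_diagonal]
          congr 1
          funext i
          ring

lemma IsHermitian.exists_specialLinearGroup_sum_sum_sq_eq [Nonempty n] (hA : A.IsHermitian)
    (hdet : A.det ≠ 0) :
    ∃ M : SpecialLinearGroup n ℝ,
      ∑ i, ∑ j, ((M : Matrix n n ℝ) * A * (M : Matrix n n ℝ)ᵀ) i j ^ 2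
        = Fintype.card n * |A.det| ^ (2 / Fintype.card n : ℝ) := by
  set d := Fintype.card n
  have hd : (d : ℝ) ≠ 0 := by simp [d, Fintype.card_ne_zero]
  have hdet_prod : A.det = ∏ i, hA.eigenvalues i := by simpa using hA.det_eq_prod_eigenvalues
  have habs : 0 < |A.det| := abs_pos.mpr hdet
  have hne : ∀ i, hA.eigenvalues i ≠ 0 := fun i hi =>
    hdet (by rw [hdet_prod]; exact prod_eq_zero (mem_univ i) hi)
  set c : ℝ := |A.det| ^ (1 / (2 * d) : ℝ)
  have hc_pow : ∀ k : ℕ, c ^ k = |A.det| ^ (k / (2 * d) : ℝ) := fun k => by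
    rw [← Real.rpow_natCast, ← Real.rpow_mul habs.le]
    ring_nf
  set s : n → ℝ := fun i => c / √|hA.eigenvalues i|
  have hs : |∏ i, s i| = 1 := by
    rw [prod_div_distrib, prod_const, card_univ, ← Real.sqrt_prod _ fun i _ => abs_nonneg _,
      ← abs_prod, ← hdet_prod, hc_pow, Real.sqrt_eq_rpow,
      show (d : ℝ) / (2 * d) = 1 / 2 by field_simp, div_self (by positivity), abs_one]
  obtain ⟨M, hM⟩ := hA.exists_specialLinearGroup_mul_mul_transpose_eq_diagonal hs
  have hterm : ∀ i, (s i ^ 2 * hA.eigenvalues i) ^ 2 = |A.det| ^ (2 / d : ℝ) := fun i => by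
    have hc4 : (s i ^ 2 * hA.eigenvalues i) ^ 2 = c ^ 4 := by
      have : |hA.eigenvalues i| ≠ 0 := abs_ne_zero.mpr (hne i)
      simp only [s]
      rw [div_pow, Real.sq_sqrt (abs_nonneg _)]
      field_simp
      rw [sq_abs]
    rw [hc4, hc_pow]
    congr 1
    field_simp
    norm_num
  refine ⟨M, ?_⟩
  simp [hM, sum_sum_sq_diagonal_apply, hterm, d]

lemma IsHermitian.exists_specialLinearGroup_sum_sum_sq_eq_pow_four_mul [Nonempty n]
    (hA : A.IsHermitian) (hdet : A.det = 0) {t : ℝ} (ht : t ≠ 0) :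
    ∃ M : SpecialLinearGroup n ℝ,
      ∑ i, ∑ j, ((M : Matrix n n ℝ) * A * (M : Matrix n n ℝ)ᵀ) i j ^ 2
        = t ^ 4 * ∑ i, hA.eigenvalues i ^ 2 := by
  obtain ⟨k, -, hk⟩ : ∃ k ∈ univ, hA.eigenvalues k = 0 :=
    prod_eq_zero_iff.mp (by simpa [hdet] using hA.det_eq_prod_eigenvalues.symm)
  set s : n → ℝ := Function.update (fun _ => t) k (t ^ (Fintype.card n - 1))⁻¹
  have hs : |∏ i, s i| = 1 := by
    simp [s, prod_update_of_mem, card_univ_sdiff, ht]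
  obtain ⟨M, hM⟩ := hA.exists_specialLinearGroup_mul_mul_transpose_eq_diagonal hs
  refine ⟨M, ?_⟩
  rw [hM, sum_sum_sq_diagonal_apply, mul_sum]
  refine sum_congr rfl fun i _ => ?_
  rcases eq_or_ne i k with rfl | hi
  · simp [hk]
  · simp only [s, Function.update_of_ne hi]
    ring

theorem IsHermitian.iInf_sum_sum_sq_mul_mul_transpose_rpow [Nonempty n] (hA : A.IsHermitian) :
    ⨅ M : SpecialLinearGroup n ℝ,
        (∑ i, ∑ j, ((M : Matrix n n ℝ) * A * (M : Matrix n n ℝ)ᵀ) i j ^ 2)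
          ^ ((Fintype.card n : ℝ) / 4)
      = (Fintype.card n : ℝ) ^ ((Fintype.card n : ℝ) / 4) * |A.det| ^ (1 / 2 : ℝ) := by
  have hd : (0 : ℝ) < Fintype.card n := Nat.cast_pos.mpr Fintype.card_pos
  have hbdd : BddBelow (Set.range fun M : SpecialLinearGroup n ℝ =>
      (∑ i, ∑ j, ((M : Matrix n n ℝ) * A * (M : Matrix n n ℝ)ᵀ) i j ^ 2)
        ^ ((Fintype.card n : ℝ) / 4)) :=
    ⟨0, by rintro _ ⟨M, rfl⟩; positivity⟩
  refine le_antisymm ?_ (le_ciInf fun M => ?_)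
  · by_cases hdet : A.det = 0
    · rw [hdet, abs_zero, Real.zero_rpow one_half_pos.ne', mul_zero]
      refine ge_of_tendsto (Real.tendsto_pow_four_mul_rpow_nhdsGT_zero
          (∑ i, hA.eigenvalues i ^ 2) (p := (Fintype.card n : ℝ) / 4) (by positivity))
        (eventually_nhdsWithin_of_forall fun t (ht : 0 < t) => ?_)
      obtain ⟨M, hM⟩ := hA.exists_specialLinearGroup_sum_sum_sq_eq_pow_four_mul hdet ht.ne'
      exact (ciInf_le hbdd M).trans_eq (by rw [hM])
    · obtain ⟨M, hM⟩ := hA.exists_specialLinearGroup_sum_sum_sq_eq hdet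
      exact (ciInf_le hbdd M).trans_eq (by
        rw [hM, Real.mul_rpow_two_div_rpow_div_four hd (abs_nonneg _)])
  · rw [← Real.mul_rpow_two_div_rpow_div_four hd (abs_nonneg _), ← M.det_mul_mul_transpose A]
    exact Real.rpow_le_rpow (by positivity)
      ((hA.mul_mul_transpose M).card_mul_abs_det_rpow_le_sum_sum_sq) (by positivity)

end Matrix

theorem stmt7_general (d : ℕ) (hd : 0 < d) (V : Type*) [AddCommGroup V] [Module ℝ V]
    (B : LinearMap.BilinForm ℝ V) (hB : B.IsSymm)
    (v : Fin d → V) (A : Matrix (Fin d) (Fin d) ℝ) (hA : ∀ i j, A i j = B (v i) (v j)) :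
    (⨅ M : Matrix.SpecialLinearGroup (Fin d) ℝ,
        (∑ j₁ : Fin d, ∑ j₂ : Fin d,
          (((M : Matrix (Fin d) (Fin d) ℝ) * A *
              (M : Matrix (Fin d) (Fin d) ℝ).transpose) j₁ j₂) ^ 2) ^ ((d : ℝ) / 4))
      = (d : ℝ) ^ ((d : ℝ) / 4) * |A.det| ^ ((1 : ℝ) / 2) := by
  have : Nonempty (Fin d) := ⟨⟨0, hd⟩⟩
  have hAh : A.IsHermitian := by
    ext i j
    simp [hA, hB.eq]
  simpa using hAh.iInf_sum_sum_sq_mul_mul_transpose_rpow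

theorem stmt7 (d : ℕ) (hd : 0 < d) (V : Type*) [AddCommGroup V] [Module ℝ V]
    [FiniteDimensional ℝ V] (hdim : Module.finrank ℝ V = d)
    (B : LinearMap.BilinForm ℝ V) (hB : B.IsSymm)
    (v : Fin d → V) (A : Matrix (Fin d) (Fin d) ℝ) (hA : ∀ i j, A i j = B (v i) (v j)) :
    (⨅ M : Matrix.SpecialLinearGroup (Fin d) ℝ,
        (∑ j₁ : Fin d, ∑ j₂ : Fin d,
          (((M : Matrix (Fin d) (Fin d) ℝ) * A *
              (M : Matrix (Fin d) (Fin d) ℝ).transpose) j₁ j₂) ^ 2) ^ ((d : ℝ) / 4))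
      = (d : ℝ) ^ ((d : ℝ) / 4) * |A.det| ^ ((1 : ℝ) / 2) :=
  stmt7_general d hd V B hB v A hA
end

section
/- Fix integers $d \ge 1$ and $n \ge 1$, and for each $j \ge 1$ let $\kappa_j$ be the smallest positive integer such that $\binom{d+\kappa_j}{d} \ge j+1$. Define $Q = \sum_{j=1}^n \kappa_j$. Then $Q$ is the minimum, over all sets of $n$ distinct nonconstant monomials in $d$ variables, of the sum of their degrees. -/
open Finset

lemma card_piAntidiag_univ (d k : ℕ) :
    (Finset.piAntidiag (Finset.univ : Finset (Fin d)) k).card = (d + k - 1).choose k := by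
  rw [← Finset.map_sym_eq_piAntidiag, Finset.card_map, Finset.sym_univ,
    Finset.card_univ, Sym.card_sym_eq_multichoose, Fintype.card_fin, Nat.multichoose_eq]

noncomputable def Sle (d m : ℕ) : Finset (Fin d → ℕ) :=
  (Finset.range (m+1)).biUnion (fun k => Finset.piAntidiag Finset.univ k)

lemma mem_Sle {d m : ℕ} {α : Fin d → ℕ} : α ∈ Sle d m ↔ ∑ l, α l ≤ m := by
  simp only [Sle, Finset.mem_biUnion, Finset.mem_range, Nat.lt_succ_iff,
    Finset.mem_piAntidiag]
  constructor
  · rintro ⟨k, hk, rfl, -⟩; exact hk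
  · exact fun h => ⟨_, h, rfl, fun i _ => Finset.mem_univ i⟩

lemma card_Sle (d m : ℕ) (hd : 0 < d) : (Sle d m).card = (d + m).choose d := by
  rw [Sle, Finset.card_biUnion]
  · have : ∀ k, (Finset.piAntidiag (Finset.univ : Finset (Fin d)) k).card
        = (k + (d-1)).choose (d-1) := by
      intro k
      rw [card_piAntidiag_univ]
      rw [show d + k - 1 = k + (d-1) by omega]
      rw [← Nat.choose_symm (by omega)]
      congr 1; omega
    simp_rw [this]
    rw [Nat.sum_range_add_choose]
    congr 1 <;> omega
  · intro x _ y _ hxy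
    simp only [Finset.disjoint_left, Finset.mem_piAntidiag]
    rintro a ⟨rfl, -⟩ ⟨h, -⟩
    exact hxy h

lemma mem_erase_Sle {d m : ℕ} {α : Fin d → ℕ} :
    α ∈ (Sle d m).erase 0 ↔ α ≠ 0 ∧ ∑ l, α l ≤ m := by
  rw [Finset.mem_erase, mem_Sle]

lemma card_erase_Sle (d m : ℕ) (hd : 0 < d) :
    ((Sle d m).erase 0).card = (d + m).choose d - 1 := by
  rw [Finset.card_erase_of_mem, card_Sle d m hd]
  rw [mem_Sle]; simp

lemma sum_pos_of_ne_zero {d : ℕ} {α : Fin d → ℕ} (h : α ≠ 0) : 0 < ∑ l, α l := by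
  rcases Nat.eq_zero_or_pos (∑ l, α l) with h0 | h0
  · exfalso; apply h; funext l
    exact (Finset.sum_eq_zero_iff.mp h0) l (Finset.mem_univ l)
  · exact h0

lemma lb (d : ℕ) (hd : 0 < d) (κ : ℕ → ℕ) :
    ∀ n : ℕ, (∀ j, 1 ≤ j → j ≤ n →
      IsLeast {m : ℕ | 0 < m ∧ j + 1 ≤ (d + m).choose d} (κ j)) →
    ∀ T : Finset (Fin d → ℕ), T.card = n → (∀ α ∈ T, α ≠ 0) →
    ∑ j ∈ Finset.Icc 1 n, κ j ≤ ∑ α ∈ T, ∑ l, α l := by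
  intro n
  induction n with
  | zero => intro _ T hT _; simp [Finset.card_eq_zero.mp hT]
  | succ n ih =>
    intro hκ T hT hT0
    have hne : T.Nonempty := Finset.card_pos.mp (by omega)
    obtain ⟨α₀, hα₀, hmax⟩ := Finset.exists_max_image T (fun α => ∑ l, α l) hne
    have hDpos : 0 < ∑ l, α₀ l := sum_pos_of_ne_zero (hT0 α₀ hα₀)
    have hsub : T ⊆ (Sle d (∑ l, α₀ l)).erase 0 := by
      intro α hα
      exact mem_erase_Sle.mpr ⟨hT0 α hα, hmax α hα⟩
    have hcard : n + 1 ≤ (d + ∑ l, α₀ l).choose d - 1 := by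
      rw [← hT, ← card_erase_Sle d (∑ l, α₀ l) hd]
      exact Finset.card_le_card hsub
    have hchoose : 0 < (d + ∑ l, α₀ l).choose d := Nat.choose_pos (by omega)
    have hκle : κ (n+1) ≤ ∑ l, α₀ l :=
      (hκ (n+1) (by omega) le_rfl).2 ⟨hDpos, by omega⟩
    rw [Finset.sum_Icc_succ_top (by omega : 1 ≤ n + 1)]
    rw [← Finset.sum_erase_add T _ hα₀]
    have := ih (fun j h1 h2 => hκ j h1 (by omega)) (T.erase α₀)
      (by simp [Finset.card_erase_of_mem hα₀, hT])
      (fun α hα => hT0 α (Finset.mem_of_mem_erase hα))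
    exact Nat.add_le_add this hκle

lemma kappa_mono (d n : ℕ) (κ : ℕ → ℕ)
    (hκ : ∀ j, 1 ≤ j → j ≤ n →
      IsLeast {m : ℕ | 0 < m ∧ j + 1 ≤ (d + m).choose d} (κ j))
    {i j : ℕ} (h1 : 1 ≤ i) (hij : i ≤ j) (hjn : j ≤ n) : κ i ≤ κ j := by
  obtain ⟨hpos, hge⟩ := (hκ j (by omega) hjn).1
  exact (hκ i h1 (by omega)).2 ⟨hpos, by omega⟩

lemma ub (d n : ℕ) (hd : 0 < d) (κ : ℕ → ℕ)
    (hκ : ∀ j, 1 ≤ j → j ≤ n →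
      IsLeast {m : ℕ | 0 < m ∧ j + 1 ≤ (d + m).choose d} (κ j)) :
    ∀ n', n' ≤ n → ∃ T : Finset (Fin d → ℕ), T.card = n' ∧ (∀ α ∈ T, α ≠ 0) ∧
      (∀ j, n' ≤ j → 1 ≤ j → j ≤ n → ∀ α ∈ T, ∑ l, α l ≤ κ j) ∧
      ∑ α ∈ T, ∑ l, α l ≤ ∑ j ∈ Finset.Icc 1 n', κ j := by
  intro n'
  induction n' with
  | zero => intro _; exact ⟨∅, by simp⟩
  | succ n' ih =>
    intro h
    obtain ⟨T, hTc, hT0, hTb, hTs⟩ := ih (le_trans (Nat.le_succ n') h)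
    have hκ1 : 0 < κ (n'+1) ∧ n'+1+1 ≤ (d + κ (n'+1)).choose d :=
      (hκ (n'+1) (Nat.succ_le_succ (Nat.zero_le n')) h).1
    have hchoose : 0 < (d + κ (n'+1)).choose d := Nat.choose_pos (Nat.le_add_right d _)
    have hsub : T ⊆ (Sle d (κ (n'+1))).erase 0 := by
      intro α hα
      exact mem_erase_Sle.mpr ⟨hT0 α hα, hTb (n'+1) (Nat.le_succ n') (Nat.succ_le_succ (Nat.zero_le n')) h α hα⟩
    have hlt : T.card < ((Sle d (κ (n'+1))).erase 0).card := by
      rw [hTc, card_erase_Sle d _ hd]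
      clear hTs ih
      omega
    have hsd : ((Sle d (κ (n'+1))).erase 0 \ T).Nonempty := by
      rw [← Finset.card_pos, Finset.card_sdiff_of_subset hsub]
      clear hTs ih
      omega
    obtain ⟨β, hβsd⟩ := hsd
    obtain ⟨hβmem, hβT⟩ := Finset.mem_sdiff.mp hβsd
    obtain ⟨hβ0, hβle⟩ := mem_erase_Sle.mp hβmem
    refine ⟨insert β T, ?_, ?_, ?_, ?_⟩
    · rw [Finset.card_insert_of_notMem hβT, hTc]
    · intro α hα
      rcases Finset.mem_insert.mp hα with rfl | hα
      · exact hβ0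
      · exact hT0 α hα
    · intro j hjn' h1 hjn α hα
      rcases Finset.mem_insert.mp hα with rfl | hα
      · exact le_trans hβle (kappa_mono d n κ hκ (Nat.succ_le_succ (Nat.zero_le n')) hjn' hjn)
      · exact hTb j (le_trans (Nat.le_succ n') hjn') h1 hjn α hα
    · rw [Finset.sum_insert hβT,
        Finset.sum_Icc_succ_top (Nat.succ_le_succ (Nat.zero_le n') : 1 ≤ n' + 1)]
      linarith [hβle, hTs]

theorem stmt14 (d n : ℕ) (hd : 0 < d) (hn : 0 < n) (κ : ℕ → ℕ)
    (hκ : ∀ j, 1 ≤ j → j ≤ n →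
      IsLeast {m : ℕ | 0 < m ∧ j + 1 ≤ (d + m).choose d} (κ j)) :
    IsLeast
      {s : ℕ | ∃ T : Finset (Fin d → ℕ), T.card = n ∧ (∀ α ∈ T, α ≠ 0) ∧
        s = ∑ α ∈ T, ∑ l, α l}
      (∑ j ∈ Finset.Icc 1 n, κ j) := by
  constructor
  · obtain ⟨T, hTc, hT0, _, hTs⟩ := ub d n hd κ hκ n le_rfl
    have hlb := lb d hd κ n hκ T hTc hT0
    exact ⟨T, hTc, hT0, le_antisymm hlb hTs⟩
  · rintro s ⟨T, hTc, hT0, rfl⟩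
    exact lb d hd κ n hκ T hTc hT0
end
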